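/- The set {u ∈ [0,1] : B̄_𝑁(u) = 0} is nonempty; its least element ρ₀ satisfies ρ₀ < 1, and the derivative of B̄_𝑁 at ρ₀ is negative: Σ_{j∉𝑁, j≥1} j·b_j·ρ₀^{j−1} < 0. -/

import Mathlib

/-!
Let `a j` be the coefficients of `B̄_N`. By the Weierstrass M-test `B̄_N` is continuous on `[0, 1]`;
`B̄_N 0 = a 0 ≥ 0` and `B̄_N 1 = -∑_{k ∈ N} b k < 0`, so its zero set in `[0, 1]` is compact,
nonempty, and has a least element `ρ₀ < 1`. The derivative is controlled by the termwise inequality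
`j ρ^(j-1) (1 - ρ) ≤ 1 - ρ^j` on `[0, 1]`, an equality for `j = 1`, the only index whose coefficient
may be negative. Summing, `B̄_N'(ρ₀) (1 - ρ₀) ≤ B̄_N 1 - B̄_N ρ₀ = B̄_N 1 < 0`.
-/

open Finset Set

section
variable {β α : Type*} [DecidableEq β] [AddCommGroup α] [TopologicalSpace α]
  [IsTopologicalAddGroup α] {f : β → α} {s : α}

theorem HasSum.of_ite_eq_zero {i : β} (h : HasSum (fun j => if j = i then 0 else f j) s) :
    HasSum f (s + f i) := by
  convert h.update i (f i) using 1
  · ext j; by_cases hj : j = i <;> simp [hj]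
  · simp [add_comm]

theorem HasSum.ite_mem_zero (hf : HasSum f s) (N : Finset β) :
    HasSum (fun j => if j ∈ N then 0 else f j) (s - ∑ k ∈ N, f k) := by
  have hN : HasSum (fun j => if j ∈ N then f j else 0) (∑ k ∈ N, f k) := by
    simpa using hasSum_sum_of_ne_finset_zero (f := fun j => if j ∈ N then f j else 0) (s := N)
      fun j hj => if_neg hj
  exact (hf.sub hN).congr_fun fun j => by by_cases hj : j ∈ N <;> simp [hj]

end

theorem exists_isLeast_preimage_of_continuousOn {α δ : Type*} [ConditionallyCompleteLinearOrder α]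
    [TopologicalSpace α] [OrderTopology α] [DenselyOrdered α] [LinearOrder δ] [TopologicalSpace δ]
    [OrderClosedTopology δ] {f : α → δ} {a b : α} {y : δ} (hab : a ≤ b)
    (hf : ContinuousOn f (Icc a b)) (ha : y ≤ f a) (hb : f b < y) :
    ∃ c, IsLeast {x | x ∈ Icc a b ∧ f x = y} c ∧ c < b := by
  obtain ⟨c, hc, hfc⟩ := intermediate_value_Icc' hab hf ⟨hb.le, ha⟩
  have hclosed : IsClosed {x | x ∈ Icc a b ∧ f x = y} :=
    hf.preimage_isClosed_of_isClosed isClosed_Icc isClosed_singleton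
  obtain ⟨ρ, hρ⟩ := (isCompact_Icc.of_isClosed_subset hclosed fun x hx => hx.1).exists_isLeast
    ⟨c, hc, hfc⟩
  refine ⟨ρ, hρ, hρ.1.1.2.lt_of_ne ?_⟩
  rintro rfl
  exact hb.ne hρ.1.2

theorem abs_mul_pow_le_abs {x u : ℝ} (hu : |u| ≤ 1) (j : ℕ) : |x * u ^ j| ≤ |x| := by
  rw [abs_mul, abs_pow]
  exact mul_le_of_le_one_right (abs_nonneg x) (pow_le_one₀ (abs_nonneg u) hu)

theorem summable_mul_pow_of_abs_le_one {a : ℕ → ℝ} (ha : Summable fun j => |a j|) {u : ℝ}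
    (hu : |u| ≤ 1) : Summable fun j => a j * u ^ j :=
  ha.of_norm_bounded fun j => abs_mul_pow_le_abs hu j

theorem continuousOn_tsum_mul_pow {a : ℕ → ℝ} (ha : Summable fun j => |a j|) :
    ContinuousOn (fun u : ℝ => ∑' j, a j * u ^ j) (Icc (-1) 1) :=
  continuousOn_tsum (fun j => (continuous_const.mul (continuous_pow j)).continuousOn) ha
    fun j _ hu => abs_mul_pow_le_abs (abs_le.mpr hu) j

theorem summable_natCast_mul_pow_pred {ρ : ℝ} (hρ : |ρ| < 1) :
    Summable fun n : ℕ => (n : ℝ) * ρ ^ (n - 1) := by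
  rw [← summable_nat_add_iff 1]
  refine ((summable_pow_mul_geometric_of_norm_lt_one 1 hρ).add
    (summable_geometric_of_norm_lt_one hρ)).congr fun n => ?_
  simp only [Nat.add_sub_cancel, Nat.cast_add, Nat.cast_one, pow_one]
  ring

theorem summable_natCast_mul_mul_pow_pred {a : ℕ → ℝ} {C : ℝ} (ha : ∀ j, |a j| ≤ C) {ρ : ℝ}
    (hρ : |ρ| < 1) : Summable fun j : ℕ => (j : ℝ) * a j * ρ ^ (j - 1) := by
  refine ((summable_natCast_mul_pow_pred (ρ := |ρ|) (by rwa [abs_abs])).mul_left C).of_norm_bounded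
    fun j => ?_
  calc ‖(j : ℝ) * a j * ρ ^ (j - 1)‖ = |a j| * (j * |ρ| ^ (j - 1)) := by
        rw [Real.norm_eq_abs, abs_mul, abs_mul, abs_pow, Nat.abs_cast]; ring
    _ ≤ C * (j * |ρ| ^ (j - 1)) := by gcongr; exact ha j

theorem natCast_mul_pow_pred_mul_one_sub_le {ρ : ℝ} (h0 : 0 ≤ ρ) (h1 : ρ ≤ 1) (n : ℕ) :
    n * ρ ^ (n - 1) * (1 - ρ) ≤ 1 - ρ ^ n := by
  rw [← geom_sum_mul_neg]
  gcongr ?_ * _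
  calc (n : ℝ) * ρ ^ (n - 1) = ∑ _i ∈ range n, ρ ^ (n - 1) := by simp
    _ ≤ ∑ i ∈ range n, ρ ^ i :=
      sum_le_sum fun i hi => pow_le_pow_of_le_one h0 h1 (by grind)

theorem mul_one_sub_le_sub_of_hasSum {a : ℕ → ℝ} (ha : ∀ j, 2 ≤ j → 0 ≤ a j) {ρ s t d : ℝ}
    (h0 : 0 ≤ ρ) (h1 : ρ ≤ 1) (hs : HasSum a s) (ht : HasSum (fun j => a j * ρ ^ j) t)
    (hd : HasSum (fun j : ℕ => j * a j * ρ ^ (j - 1)) d) :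
    d * (1 - ρ) ≤ s - t := by
  refine hasSum_le (fun j => ?_) (hd.mul_right _) (hs.sub ht)
  match j with
  | 0 => simp
  | 1 => simp [mul_sub]
  | j + 2 =>
    calc ((j + 2 : ℕ) : ℝ) * a (j + 2) * ρ ^ (j + 2 - 1) * (1 - ρ)
        = a (j + 2) * ((j + 2 : ℕ) * ρ ^ (j + 2 - 1) * (1 - ρ)) := by ring
      _ ≤ a (j + 2) * (1 - ρ ^ (j + 2)) := by
        gcongr
        · exact ha _ (by omega)
        · exact natCast_mul_pow_pred_mul_one_sub_le h0 h1 _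
      _ = a (j + 2) - a (j + 2) * ρ ^ (j + 2) := by ring

theorem stmt_3_general
    (b : ℕ → ℝ)
    (hb_nonneg : ∀ j : ℕ, j ≠ 1 → 0 ≤ b j)
    (hb_sum : HasSum (fun j : ℕ => if j = 1 then 0 else b j) (-(b 1)))
    (N : Finset ℕ) (hN : N.Nonempty)
    (hbN : ∀ k ∈ N, 0 < b k) :
    ∃ ρ₀ d : ℝ,
      IsLeast {u : ℝ | u ∈ Set.Icc (0 : ℝ) 1 ∧
          (∑' j : ℕ, if j ∈ N then 0 else b j * u ^ j) = 0} ρ₀ ∧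
      ρ₀ < 1 ∧
      HasSum (fun j : ℕ =>
        if j ∉ N ∧ 1 ≤ j then (j : ℝ) * b j * ρ₀ ^ (j - 1) else 0) d ∧
      d < 0 := by
  set a : ℕ → ℝ := fun j => if j ∈ N then 0 else b j
  have ha_sum : HasSum a (-∑ k ∈ N, b k) := by
    simpa using (by simpa using hb_sum.of_ite_eq_zero : HasSum b 0).ite_mem_zero N
  have ha_abs : Summable fun j => |a j| := ha_sum.summable.abs
  have ha_nonneg : ∀ j, j ≠ 1 → 0 ≤ a j := fun j hj => by
    by_cases hjN : j ∈ N <;> simp [a, hjN, hb_nonneg j hj]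
  have hB (u : ℝ) : (∑' j : ℕ, if j ∈ N then 0 else b j * u ^ j) = ∑' j, a j * u ^ j := by
    simp only [a, ite_mul, zero_mul]
  have hB0 : 0 ≤ ∑' j, a j * (0 : ℝ) ^ j := by
    rw [tsum_eq_single 0 fun j hj => by simp [hj]]
    simpa using ha_nonneg 0 zero_ne_one
  have hB1 : ∑' j, a j * (1 : ℝ) ^ j < 0 := by
    simpa [ha_sum.tsum_eq] using sum_pos hbN hN
  obtain ⟨ρ, hρ, hρ1⟩ := exists_isLeast_preimage_of_continuousOn zero_le_one
    ((continuousOn_tsum_mul_pow ha_abs).mono (Icc_subset_Icc (by norm_num) le_rfl)) hB0 hB1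
  have hρ0 : 0 ≤ ρ := hρ.1.1.1
  have hρ_abs : |ρ| < 1 := abs_lt.mpr ⟨by linarith, hρ1⟩
  have hBρ : HasSum (fun j => a j * ρ ^ j) 0 :=
    hρ.1.2 ▸ (summable_mul_pow_of_abs_le_one ha_abs hρ_abs.le).hasSum
  obtain ⟨d, hd⟩ := summable_natCast_mul_mul_pow_pred
    (fun j => ha_abs.le_tsum j fun i _ => abs_nonneg (a i)) hρ_abs
  have hle := mul_one_sub_le_sub_of_hasSum (fun j hj => ha_nonneg j (by omega)) hρ0 hρ1.le
    ha_sum hBρ hd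
  refine ⟨ρ, d, by simpa only [hB] using hρ, hρ1, hd.congr_fun fun j => ?_, ?_⟩
  · rcases j with _ | j
    · simp
    · by_cases hjN : j + 1 ∈ N <;> simp [a, hjN]
  · nlinarith [sum_pos hbN hN]

/-- The set `{u ∈ [0,1] : B̄_N(u) = 0}` is nonempty; its least element `ρ₀`
satisfies `ρ₀ < 1`, and the derivative of `B̄_N` at `ρ₀` is negative:
`Σ_{j∉N, j≥1} j·b_j·ρ₀^{j−1} < 0`. -/
theorem stmt_3
    (b : ℕ → ℝ)
    (hb_nonneg : ∀ j : ℕ, j ≠ 1 → 0 ≤ b j)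
    (hb1 : b 1 < 0)
    (hb_sum : HasSum (fun j : ℕ => if j = 1 then 0 else b j) (-(b 1)))
    (N : Finset ℕ) (hN : N.Nonempty) (h1N : (1 : ℕ) ∉ N)
    (hbN : ∀ k ∈ N, 0 < b k) :
    ∃ ρ₀ d : ℝ,
      IsLeast {u : ℝ | u ∈ Set.Icc (0 : ℝ) 1 ∧
          (∑' j : ℕ, if j ∈ N then 0 else b j * u ^ j) = 0} ρ₀ ∧
      ρ₀ < 1 ∧
      HasSum (fun j : ℕ =>
        if j ∉ N ∧ 1 ≤ j then (j : ℝ) * b j * ρ₀ ^ (j - 1) else 0) d ∧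
      d < 0 :=
  stmt_3_general b hb_nonneg hb_sum N hN hbN
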